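/- arXiv:2205.12211 — 4 statements merged into one kernel-verified Lean document; each statement's English description precedes it below -/
import Mathlib

section
/- Let H be a Hermitian operator on a finite-dimensional Hilbert space satisfying the second no-resonance condition, with eigenbasis {|E⟩}. Then for any operator A on the twofold tensor product of the Hilbert space, the infinite-time average of (e^{-iHt} ⊗ e^{-iHt}) A (e^{iHt} ⊗ e^{iHt}) equals Σ_{E,E'} [ |E,E'⟩⟨E,E'| A |E,E'⟩⟨E,E'| + |E,E'⟩⟨E,E'| A |E',E⟩⟨E',E| ] − Σ_E |E,E⟩⟨E,E| A |E,E⟩⟨E,E| (the second Hamiltonian twirling identity). -/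
/-!
The matrix element oscillates as `exp (-I θ t)` with `θ = (E a + E b) - (E c + E d)`. Since
`∫₀ᵀ exp (-I θ t) dt` stays bounded for `θ ≠ 0`, the time average of `exp (-I θ t)` is `1` if
`θ = 0` and `0` otherwise. By the second no-resonance condition `θ = 0` exactly when `(c, d)` is
`(a, b)` or `(b, a)`, and inclusion–exclusion over these two cases, which coincide only when
`a = b = c = d`, gives the right-hand side.
-/

open Filter
open scoped BigOperators

/-- The `k`-th no-resonance condition for eigenvalues `E : Fin D → ℝ`. -/
def NoResonance {D : ℕ} (E : Fin D → ℝ) (k : ℕ) : Prop :=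
  ∀ α β : Fin k → Fin D,
    (∑ i, E (α i)) = (∑ i, E (β i)) →
    Multiset.map α Finset.univ.val = Multiset.map β Finset.univ.val

/-- `HasTimeAvgC f L` : the infinite-time average `lim_{T→∞} (1/T)∫_0^T f(t) dt` equals `L`. -/
def HasTimeAvgC (f : ℝ → ℂ) (L : ℂ) : Prop :=
  Tendsto (fun T : ℝ => (1 / (T : ℂ)) * ∫ t in (0:ℝ)..T, f t) atTop (nhds L)

open Complex

theorem ite_add_ite_sub_ite_and {M : Type*} [AddCommGroup M] (p q : Prop) [Decidable p]
    [Decidable q] (x : M) :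
    ((if p then x else 0) + (if q then x else 0) - if p ∧ q then x else 0) =
      if p ∨ q then x else 0 := by
  by_cases hp : p <;> by_cases hq : q <;> simp [hp, hq]

theorem HasTimeAvgC.mul_const {f : ℝ → ℂ} {L : ℂ} (h : HasTimeAvgC f L) (C : ℂ) :
    HasTimeAvgC (fun t => f t * C) (L * C) := by
  unfold HasTimeAvgC at h ⊢
  simpa only [intervalIntegral.integral_mul_const, mul_assoc] using h.mul_const C

theorem hasTimeAvgC_const (C : ℂ) : HasTimeAvgC (fun _ => C) C := by
  refine tendsto_const_nhds.congr' ?_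
  filter_upwards [eventually_ne_atTop 0] with T hT
  rw [intervalIntegral.integral_const, sub_zero, real_smul, one_div,
    inv_mul_cancel_left₀ (ofReal_ne_zero.mpr hT)]

theorem hasTimeAvgC_exp_neg_I_mul_of_ne_zero {θ : ℝ} (hθ : θ ≠ 0) :
    HasTimeAvgC (fun t => exp (-I * θ * t)) 0 := by
  have hk : -I * θ ≠ 0 := by simp [hθ]
  have hinv : Tendsto (fun T : ℝ => 1 / (T : ℂ)) atTop (nhds 0) := by
    simpa using tendsto_inv_atTop_zero.ofReal
  have hbdd : IsBoundedUnder (· ≤ ·) atTop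
      (fun T : ℝ => ‖∫ t in (0:ℝ)..T, exp (-I * θ * t)‖) := by
    refine isBoundedUnder_of ⟨2 / ‖-I * θ‖, fun T => ?_⟩
    rw [integral_exp_mul_complex hk, norm_div]
    gcongr
    calc ‖exp (-I * θ * T) - exp (-I * θ * 0)‖
        ≤ ‖exp (-I * θ * T)‖ + ‖exp (-I * θ * 0)‖ := norm_sub_le _ _
      _ = 2 := by
        simp only [mul_zero, exp_zero, norm_one]
        rw [show -I * θ * T = ((-θ * T : ℝ) : ℂ) * I by push_cast; ring, norm_exp_ofReal_mul_I]
        norm_num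
  exact hinv.zero_mul_isBoundedUnder_le hbdd

theorem hasTimeAvgC_exp_neg_I_mul (θ : ℝ) :
    HasTimeAvgC (fun t => exp (-I * θ * t)) (if θ = 0 then 1 else 0) := by
  split_ifs with hθ
  · simpa [hθ] using hasTimeAvgC_const 1
  · exact hasTimeAvgC_exp_neg_I_mul_of_ne_zero hθ

theorem NoResonance.add_eq_add_iff {D : ℕ} {E : Fin D → ℝ} (hE : NoResonance E 2)
    {a b c d : Fin D} : E a + E b = E c + E d ↔ (a = c ∧ b = d) ∨ (a = d ∧ b = c) := by
  constructor
  · intro h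
    have hpair : ({a, b} : Multiset (Fin D)) = {c, d} :=
      hE ![a, b] ![c, d] (by simpa [Fin.sum_univ_two] using h)
    rcases Multiset.cons_eq_cons.mp hpair with ⟨rfl, hbd⟩ | ⟨-, _, hb, hd⟩
    · exact Or.inl ⟨rfl, Multiset.singleton_inj.mp hbd⟩
    · rw [Multiset.singleton_eq_cons_iff] at hb hd
      exact Or.inr ⟨hd.1.symm, hb.1⟩
  · rintro (⟨rfl, rfl⟩ | ⟨rfl, rfl⟩)
    · rfl
    · exact add_comm _ _

/-- **Second Hamiltonian twirling identity**, stated entrywise in the eigenbasis of `H`.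
For an operator `A` on `H ⊗ H` with matrix elements `A (a,b) (c,d) = ⟨E_a,E_b|A|E_c,E_d⟩`,
the matrix element of `(e^{-iHt} ⊗ e^{-iHt}) A (e^{iHt} ⊗ e^{iHt})` is
`e^{-i((E_a+E_b)-(E_c+E_d))t} · A (a,b) (c,d)`, and if the second no-resonance condition holds,
its infinite-time average equals the corresponding matrix element of
`∑_{E,E'} [ |E,E'⟩⟨E,E'| A |E,E'⟩⟨E,E'| + |E,E'⟩⟨E,E'| A |E',E⟩⟨E',E| ]
 − ∑_E |E,E⟩⟨E,E| A |E,E⟩⟨E,E|`. -/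
theorem second_hamiltonian_twirling {D : ℕ} (E : Fin D → ℝ) (hE : NoResonance E 2)
    (A : Matrix (Fin D × Fin D) (Fin D × Fin D) ℂ) (a b c d : Fin D) :
    HasTimeAvgC
      (fun t => Complex.exp (-Complex.I * (((E a : ℂ) + E b) - ((E c : ℂ) + E d)) * t) *
        A (a, b) (c, d))
      ((if a = c ∧ b = d then A (a, b) (c, d) else 0)
        + (if a = d ∧ b = c then A (a, b) (c, d) else 0)
        - (if a = b ∧ b = c ∧ c = d then A (a, b) (c, d) else 0)) := by
  have hdiag : (a = b ∧ b = c ∧ c = d) ↔ (a = c ∧ b = d) ∧ (a = d ∧ b = c) := by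
    grind
  have havg := (hasTimeAvgC_exp_neg_I_mul (E a + E b - (E c + E d))).mul_const (A (a, b) (c, d))
  simp only [hdiag, ite_add_ite_sub_ite_and, ← hE.add_eq_add_iff]
  push_cast at havg
  simpa only [sub_eq_zero, ite_mul, one_mul, zero_mul] using havg
end

section
/- Let H satisfy the second no-resonance condition with eigenbasis {|E⟩}, let |Ψ₀⟩ and |z⟩ be unit vectors with p_avg(z) = Σ_E |⟨z|E⟩⟨E|Ψ₀⟩|² > 0. Then the infinite-time average of p̃(z,t)² equals 2 − Σ_E |⟨z|E⟩⟨E|Ψ₀⟩|⁴ / p_avg(z)², where p̃(z,t) = |⟨z|e^{-iHt}|Ψ₀⟩|²/p_avg(z). -/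
/-! Writing `amp² = ∑_{(j,l)} c_j c_l e^{-i(E_j+E_l)t}` with `c_j = ⟨z|E_j⟩⟨E_j|Ψ₀⟩`, the quantity
`|amp|⁴ = |amp²|²` is a trigonometric polynomial, and its time average keeps exactly the terms
with equal frequencies `E_j + E_l = E_j' + E_l'`. By the second no-resonance condition these are
the pairs `(j', l') = (j, l)` and `(l, j)`, which gives `2 p_avg² − ∑_j |c_j|⁴`. -/

open Filter
open scoped BigOperators

/-- `HasTimeAvg f L` : the infinite-time average `lim_{T→∞} (1/T)∫_0^T f(t) dt` equals `L`. -/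
def HasTimeAvg (f : ℝ → ℝ) (L : ℝ) : Prop :=
  Tendsto (fun T : ℝ => (1 / T) * ∫ t in (0:ℝ)..T, f t) atTop (nhds L)

/-- The amplitude `⟨z|e^{-iHt}|Ψ₀⟩ = ∑_j ⟨z|E_j⟩ e^{-iE_j t} ⟨E_j|Ψ₀⟩` in the eigenbasis `v`. -/
noncomputable def amp {D : ℕ} (E : Fin D → ℝ) (v : Fin D → EuclideanSpace ℂ (Fin D))
    (z Ψ₀ : EuclideanSpace ℂ (Fin D)) (t : ℝ) : ℂ :=
  ∑ j, (inner ℂ z (v j) : ℂ) * Complex.exp (-Complex.I * (E j : ℂ) * (t : ℂ)) *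
    (inner ℂ (v j) Ψ₀ : ℂ)

/-- `p_avg(z) = ∑_E |⟨z|E⟩⟨E|Ψ₀⟩|²`. -/
noncomputable def pavg {D : ℕ} (v : Fin D → EuclideanSpace ℂ (Fin D))
    (z Ψ₀ : EuclideanSpace ℂ (Fin D)) : ℝ :=
  ∑ j, (‖(inner ℂ z (v j) : ℂ) * (inner ℂ (v j) Ψ₀ : ℂ)‖) ^ 2

open Complex ComplexConjugate

namespace HasTimeAvg

lemma const_mul {f : ℝ → ℝ} {L : ℝ} (hf : HasTimeAvg f L) (c : ℝ) :
    HasTimeAvg (fun t => c * f t) (c * L) := by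
  unfold HasTimeAvg at *
  simpa only [intervalIntegral.integral_const_mul, mul_left_comm] using hf.const_mul c

lemma sum {ι : Type*} (s : Finset ι) {f : ι → ℝ → ℝ} {L : ι → ℝ}
    (hf : ∀ i ∈ s, Continuous (f i)) (h : ∀ i ∈ s, HasTimeAvg (f i) (L i)) :
    HasTimeAvg (fun t => ∑ i ∈ s, f i t) (∑ i ∈ s, L i) := by
  unfold HasTimeAvg at *
  refine (tendsto_finsetSum s h).congr fun T => ?_
  rw [intervalIntegral.integral_finsetSum fun i hi => (hf i hi).intervalIntegrable 0 T,
    Finset.mul_sum]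

end HasTimeAvg

lemma hasTimeAvg_const (b : ℝ) : HasTimeAvg (fun _ => b) b := by
  refine tendsto_const_nhds.congr' ?_
  filter_upwards [eventually_ne_atTop 0] with T hT
  simp [hT]

lemma hasTimeAvg_zero_of_abs_integral_le {f : ℝ → ℝ} {C : ℝ}
    (h : ∀ T, |∫ t in (0:ℝ)..T, f t| ≤ C) : HasTimeAvg f 0 := by
  refine squeeze_zero_norm' ?_ (tendsto_id.const_div_atTop C)
  filter_upwards [eventually_gt_atTop 0] with T hT
  rw [Real.norm_eq_abs, abs_mul, abs_of_pos (one_div_pos.2 hT), one_div_mul_eq_div, id]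
  exact div_le_div_of_nonneg_right (h T) hT.le

lemma hasTimeAvg_re_mul_exp (b : ℂ) (ν : ℝ) :
    HasTimeAvg (fun t => (b * exp (I * ν * t)).re) (if ν = 0 then b.re else 0) := by
  split_ifs with hν
  · simpa [hν] using hasTimeAvg_const b.re
  refine hasTimeAvg_zero_of_abs_integral_le (C := ‖b‖ * 2 / ‖I * ν‖) fun T => ?_
  have hc : I * ν ≠ 0 := by simp [hν]
  have hint : ∫ t in (0:ℝ)..T, (b * exp (I * ν * t)).re
      = (b * ((exp (I * ν * T) - 1) / (I * ν))).re := by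
    have hcont : Continuous fun t : ℝ => b * exp (I * ν * t) := by fun_prop
    refine (intervalIntegral.intervalIntegral_re (hcont.intervalIntegrable 0 T)).trans ?_
    rw [intervalIntegral.integral_const_mul, integral_exp_mul_complex hc]
    simp
  have hexp : ‖exp (I * ν * T) - 1‖ ≤ 2 := by
    calc ‖exp (I * ν * T) - 1‖ ≤ ‖exp (I * ν * T)‖ + ‖(1 : ℂ)‖ := norm_sub_le _ _
      _ = 2 := by norm_num [norm_exp]
  calc |∫ t in (0:ℝ)..T, (b * exp (I * ν * t)).re|
      ≤ ‖b * ((exp (I * ν * T) - 1) / (I * ν))‖ := hint ▸ abs_re_le_norm _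
    _ ≤ ‖b‖ * 2 / ‖I * ν‖ := by
        rw [norm_mul, norm_div, mul_div_assoc]
        gcongr

lemma norm_sum_mul_exp_sq {ι : Type*} [Fintype ι] (a : ι → ℂ) (ω : ι → ℝ) (t : ℝ) :
    ‖∑ i, a i * exp (-I * ω i * t)‖ ^ 2
      = ∑ i, ∑ j, (a i * conj (a j) * exp (I * (ω j - ω i : ℝ) * t)).re := by
  rw [← normSq_eq_norm_sq, ← ofReal_re (normSq _), ← mul_conj, map_sum, Finset.sum_mul_sum,
    re_sum]
  refine Finset.sum_congr rfl fun i _ => (re_sum _ _).trans ?_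
  refine Finset.sum_congr rfl fun j _ => ?_
  rw [map_mul, ← exp_conj, mul_mul_mul_comm, ← exp_add]
  simp only [map_mul, map_neg, conj_I, conj_ofReal]
  push_cast
  ring_nf

theorem hasTimeAvg_norm_sum_mul_exp_sq {ι : Type*} [Fintype ι] (a : ι → ℂ) (ω : ι → ℝ) :
    HasTimeAvg (fun t => ‖∑ i, a i * exp (-I * ω i * t)‖ ^ 2)
      (∑ i, ∑ j, if ω i = ω j then (a i * conj (a j)).re else 0) := by
  simp_rw [norm_sum_mul_exp_sq]
  refine HasTimeAvg.sum _ (fun i _ => by fun_prop) fun i _ => ?_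
  refine HasTimeAvg.sum _ (fun j _ => by fun_prop) fun j _ => ?_
  simpa only [sub_eq_zero, @eq_comm _ (ω j)] using hasTimeAvg_re_mul_exp _ (ω j - ω i)

lemma sum_mul_exp_sq {ι : Type*} [Fintype ι] (c : ι → ℂ) (E : ι → ℝ) (t : ℝ) :
    (∑ i, c i * exp (-I * E i * t)) ^ 2
      = ∑ q : ι × ι, c q.1 * c q.2 * exp (-I * (E q.1 + E q.2 : ℝ) * t) := by
  rw [sq, Finset.sum_mul_sum, ← Finset.univ_product_univ, Finset.sum_product]
  refine Finset.sum_congr rfl fun i _ => Finset.sum_congr rfl fun j _ => ?_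
  rw [mul_mul_mul_comm, ← exp_add]
  push_cast
  ring_nf

lemma NoResonance.add_eq_add_iff_s4 {D : ℕ} {E : Fin D → ℝ} (hE : NoResonance E 2)
    {q r : Fin D × Fin D} : E q.1 + E q.2 = E r.1 + E r.2 ↔ r = q ∨ r = q.swap := by
  refine ⟨fun h => ?_, ?_⟩
  · have hm := hE ![q.1, q.2] ![r.1, r.2] (by simpa [Fin.sum_univ_two] using h)
    simp only [Fin.univ_val_map, List.ofFn_succ, List.ofFn_zero, Matrix.cons_val_zero,
      Multiset.coe_eq_coe, List.pair_perm] at hm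
    simpa [Prod.ext_iff, and_comm] using hm
  · rintro (rfl | rfl)
    · rfl
    · exact add_comm _ _

lemma NoResonance.sum_resonant_pairs {D : ℕ} {E : Fin D → ℝ} (hE : NoResonance E 2)
    (c : Fin D → ℂ) :
    (∑ q : Fin D × Fin D, ∑ r : Fin D × Fin D,
      if E q.1 + E q.2 = E r.1 + E r.2 then (c q.1 * c q.2 * conj (c r.1 * c r.2)).re else 0)
      = 2 * (∑ j, ‖c j‖ ^ 2) ^ 2 - ∑ j, ‖c j‖ ^ 4 := by
  have hre : ∀ q : Fin D × Fin D, (c q.1 * c q.2 * conj (c q.1 * c q.2)).re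
      = ‖c q.1‖ ^ 2 * ‖c q.2‖ ^ 2 := by
    intro q
    rw [mul_conj, ofReal_re, normSq_mul, normSq_eq_norm_sq, normSq_eq_norm_sq]
  have hinner : ∀ q : Fin D × Fin D, (∑ r : Fin D × Fin D,
      if E q.1 + E q.2 = E r.1 + E r.2 then (c q.1 * c q.2 * conj (c r.1 * c r.2)).re else 0)
      = 2 * (‖c q.1‖ ^ 2 * ‖c q.2‖ ^ 2) - if q.1 = q.2 then ‖c q.1‖ ^ 2 * ‖c q.2‖ ^ 2 else 0 := by
    intro q
    have hfilter : Finset.univ.filter (fun r => r = q ∨ r = q.swap) = {q, q.swap} := by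
      ext; simp
    simp only [hE.add_eq_add_iff_s4]
    rw [← Finset.sum_filter, hfilter]
    by_cases hq : q.1 = q.2
    · have hswap : q.swap = q := Prod.ext hq.symm hq
      rw [hswap, Finset.insert_eq_self.2 (Finset.mem_singleton_self q), Finset.sum_singleton,
        hre, if_pos hq]
      ring
    · have hswap : q ≠ q.swap := fun h => hq (congrArg Prod.snd h).symm
      rw [Finset.sum_pair hswap, Prod.fst_swap, Prod.snd_swap, mul_comm (c q.2), hre, if_neg hq]
      ring
  have hdiag : (∑ q : Fin D × Fin D, if q.1 = q.2 then ‖c q.1‖ ^ 2 * ‖c q.2‖ ^ 2 else 0)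
      = ∑ j, ‖c j‖ ^ 4 := by
    rw [Fintype.sum_prod_type]
    refine Finset.sum_congr rfl fun j _ => ?_
    rw [Finset.sum_ite_eq, if_pos (Finset.mem_univ j)]
    ring
  rw [Finset.sum_congr rfl fun q _ => hinner q, Finset.sum_sub_distrib, hdiag, ← Finset.mul_sum,
    Fintype.sum_prod_type, sq, Finset.sum_mul_sum]

theorem NoResonance.hasTimeAvg_norm_sum_mul_exp_pow_four {D : ℕ} {E : Fin D → ℝ}
    (hE : NoResonance E 2) (c : Fin D → ℂ) :
    HasTimeAvg (fun t => ‖∑ j, c j * exp (-I * E j * t)‖ ^ 4)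
      (2 * (∑ j, ‖c j‖ ^ 2) ^ 2 - ∑ j, ‖c j‖ ^ 4) := by
  have h := hasTimeAvg_norm_sum_mul_exp_sq (fun q : Fin D × Fin D => c q.1 * c q.2)
    (fun q => E q.1 + E q.2)
  rw [hE.sum_resonant_pairs c] at h
  convert h using 2 with t
  rw [← sum_mul_exp_sq, norm_pow, ← pow_mul]

theorem timeAvg_ptilde_sq_general {D : ℕ} (E : Fin D → ℝ) (hE : NoResonance E 2)
    (v : Fin D → EuclideanSpace ℂ (Fin D))
    (z Ψ₀ : EuclideanSpace ℂ (Fin D))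
    (hpos : 0 < pavg v z Ψ₀) :
    HasTimeAvg
      (fun t => ((‖amp E v z Ψ₀ t‖) ^ 2 / pavg v z Ψ₀) ^ 2)
      (2 - (∑ j, (‖(inner ℂ z (v j) : ℂ) * (inner ℂ (v j) Ψ₀ : ℂ)‖) ^ 4) /
        (pavg v z Ψ₀) ^ 2) := by
  set c : Fin D → ℂ := fun j => inner ℂ z (v j) * inner ℂ (v j) Ψ₀
  have hamp : ∀ t, amp E v z Ψ₀ t = ∑ j, c j * exp (-I * E j * t) :=
    fun t => Finset.sum_congr rfl fun j _ => by ring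
  have hp : pavg v z Ψ₀ = ∑ j, ‖c j‖ ^ 2 := rfl
  convert (hE.hasTimeAvg_norm_sum_mul_exp_pow_four c).const_mul (pavg v z Ψ₀ ^ 2)⁻¹ using 1
  · funext t
    rw [hamp]
    ring
  · rw [← hp]
    field_simp
    rfl

/-- For `H` satisfying the second no-resonance condition, with unit vectors `z`, `Ψ₀` and
`p_avg(z) > 0`, the infinite-time average of `p̃(z,t)²` equals
`2 − (∑_E |⟨z|E⟩⟨E|Ψ₀⟩|⁴) / p_avg(z)²`. -/
theorem timeAvg_ptilde_sq {D : ℕ} (E : Fin D → ℝ) (hE : NoResonance E 2)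
    (v : Fin D → EuclideanSpace ℂ (Fin D)) (hv : Orthonormal ℂ v)
    (z Ψ₀ : EuclideanSpace ℂ (Fin D)) (hz : ‖z‖ = 1) (hΨ : ‖Ψ₀‖ = 1)
    (hpos : 0 < pavg v z Ψ₀) :
    HasTimeAvg
      (fun t => ((‖amp E v z Ψ₀ t‖) ^ 2 / pavg v z Ψ₀) ^ 2)
      (2 - (∑ j, (‖(inner ℂ z (v j) : ℂ) * (inner ℂ (v j) Ψ₀ : ℂ)‖) ^ 4) /
        (pavg v z Ψ₀) ^ 2) :=
  timeAvg_ptilde_sq_general E hE v z Ψ₀ hpos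
end

section
/- Let ρ_d = Σ_E |⟨E|Ψ₀⟩|² |E⟩⟨E| and let {|z⟩} be an orthonormal basis with p_avg(z) = ⟨z|ρ_d|z⟩ > 0 for all z. Define D_β⁻¹ = Σ_{z,E} |⟨z|E⟩⟨E|Ψ₀⟩|⁴ / p_avg(z). Then tr(ρ_d²) = Σ_E |⟨Ψ₀|E⟩|⁴ ≤ D_β⁻¹. -/
open scoped BigOperators

/-- `p_avg(z) = ⟨z|ρ_d|z⟩ = ∑_E |⟨E|Ψ₀⟩|² |⟨z|E⟩|²`. -/
noncomputable def pavgZ {D : ℕ} (v w : Fin D → EuclideanSpace ℂ (Fin D))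
    (Ψ₀ : EuclideanSpace ℂ (Fin D)) (z : Fin D) : ℝ :=
  ∑ j, ‖(inner ℂ (v j) Ψ₀ : ℂ)‖ ^ 2 * ‖(inner ℂ (w z) (v j) : ℂ)‖ ^ 2

/-!
Write `c E = |⟨E|Ψ₀⟩|²` and `a z E = |⟨z|E⟩|²`. By Parseval `c` is a probability vector and every
column `a · E` sums to one, so `p_avg = a c` is a probability vector as well. Hence
`c E ^ 2 = (∑ z, a z E * c E) ^ 2 / ∑ z, p_avg z`, which by Sedrakyan's inequality is at most
`∑ z, (a z E * c E) ^ 2 / p_avg z`; summing over `E` gives the bound.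
-/

theorem Orthonormal.sum_sq_norm_inner_right {𝕜 E ι : Type*} [RCLike 𝕜] [NormedAddCommGroup E]
    [InnerProductSpace 𝕜 E] [FiniteDimensional 𝕜 E] [Fintype ι] {v : ι → E}
    (hv : Orthonormal 𝕜 v) (hcard : Fintype.card ι = Module.finrank 𝕜 E) (x : E) :
    ∑ i, ‖inner 𝕜 (v i) x‖ ^ 2 = ‖x‖ ^ 2 := by
  let b := OrthonormalBasis.mk hv (hv.linearIndependent.span_eq_top_of_card_eq_finrank' hcard).ge
  simpa only [b, OrthonormalBasis.coe_mk] using b.sum_sq_norm_inner_right x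

theorem sum_sq_le_sum_sum_sq_div_of_stochastic {ι κ : Type*} [Fintype ι] [Fintype κ]
    (a : κ → ι → ℝ) (c : ι → ℝ) (ha : ∀ j, ∑ z, a z j = 1) (hc : ∑ j, c j = 1)
    (hp : ∀ z, 0 < ∑ j, c j * a z j) :
    ∑ j, c j ^ 2 ≤ ∑ z, (∑ j, (a z j * c j) ^ 2) / ∑ j, c j * a z j := by
  have hp_sum : ∑ z, ∑ j, c j * a z j = 1 := by
    simp only [Finset.sum_comm (γ := κ), ← Finset.mul_sum, ha, mul_one, hc]
  calc ∑ j, c j ^ 2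
      = ∑ j, (∑ z, a z j * c j) ^ 2 / ∑ z, ∑ j, c j * a z j := by
        simp only [hp_sum, ← Finset.sum_mul, ha, one_mul, div_one]
    _ ≤ ∑ j, ∑ z, (a z j * c j) ^ 2 / ∑ j, c j * a z j :=
        Finset.sum_le_sum fun j _ =>
          Finset.sq_sum_div_le_sum_sq_div _ _ fun z _ => hp z
    _ = ∑ z, (∑ j, (a z j * c j) ^ 2) / ∑ j, c j * a z j := by
        rw [Finset.sum_comm]
        simp only [Finset.sum_div]

/-- The purity of the diagonal ensemble is bounded by the inverse effective dimension:
`tr(ρ_d²) = ∑_E |⟨Ψ₀|E⟩|⁴ ≤ D_β⁻¹ = ∑_{z,E} |⟨z|E⟩⟨E|Ψ₀⟩|⁴ / p_avg(z)`. -/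
theorem purity_le_inverse_effective_dimension {D : ℕ}
    (v w : Fin D → EuclideanSpace ℂ (Fin D))
    (hv : Orthonormal ℂ v) (hw : Orthonormal ℂ w)
    (Ψ₀ : EuclideanSpace ℂ (Fin D)) (hΨ : ‖Ψ₀‖ = 1)
    (hpos : ∀ z, 0 < pavgZ v w Ψ₀ z) :
    ∑ j, ‖(inner ℂ (v j) Ψ₀ : ℂ)‖ ^ 4 ≤
      ∑ z, (∑ j, ‖(inner ℂ (w z) (v j) : ℂ) * (inner ℂ (v j) Ψ₀ : ℂ)‖ ^ 4) /
        pavgZ v w Ψ₀ z := by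
  have hcard : Fintype.card (Fin D) = Module.finrank ℂ (EuclideanSpace ℂ (Fin D)) := by simp
  have hc : ∑ j, ‖(inner ℂ (v j) Ψ₀ : ℂ)‖ ^ 2 = 1 := by
    rw [hv.sum_sq_norm_inner_right hcard, hΨ, one_pow]
  have ha (j : Fin D) : ∑ z, ‖(inner ℂ (w z) (v j) : ℂ)‖ ^ 2 = 1 := by
    rw [hw.sum_sq_norm_inner_right hcard, hv.1 j, one_pow]
  calc ∑ j, ‖(inner ℂ (v j) Ψ₀ : ℂ)‖ ^ 4
      = ∑ j, (‖(inner ℂ (v j) Ψ₀ : ℂ)‖ ^ 2) ^ 2 := by simp only [← pow_mul]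
    _ ≤ ∑ z, (∑ j, (‖(inner ℂ (w z) (v j) : ℂ)‖ ^ 2 * ‖(inner ℂ (v j) Ψ₀ : ℂ)‖ ^ 2) ^ 2) /
          pavgZ v w Ψ₀ z :=
        sum_sq_le_sum_sum_sq_div_of_stochastic _ _ ha hc hpos
    _ = _ := by simp only [norm_mul, mul_pow, ← pow_mul]
end

section
/- Suppose probability distributions p, q, p_⊥ over a finite set Z and a weight distribution p_avg with p_avg(z) > 0 satisfy q(z) = F·p(z) + (1−F)·p_⊥(z) for some F ∈ [0,1], together with the exact conditions Σ_z p_⊥(z) p̃(z) = 1 and Σ_z p_avg(z) p̃(z)² = 2, where p̃(z) = p(z)/p_avg(z). Then F_d := 2(Σ_z q(z) p̃(z)) / (Σ_z p_avg(z) p̃(z)²) − 1 = F. -/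
open scoped BigOperators

/-- **Idealized speckle benchmarking identity.** If the noisy distribution decomposes as
`q = F·p + (1−F)·p_⊥` with `∑_z p_⊥(z) p̃(z) = 1` and `∑_z p_avg(z) p̃(z)² = 2`,
where `p̃ = p/p_avg`, then `F_d := 2(∑_z q(z)p̃(z))/(∑_z p_avg(z)p̃(z)²) − 1 = F`. -/
theorem Fd_equals_fidelity {Z : Type*} [Fintype Z]
    (p q pperp pavg : Z → ℝ) (F : ℝ) (hF : F ∈ Set.Icc (0:ℝ) 1)
    (hp : ∀ z, 0 ≤ p z) (hp1 : ∑ z, p z = 1)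
    (hqnn : ∀ z, 0 ≤ q z) (hq1 : ∑ z, q z = 1)
    (hperp : ∀ z, 0 ≤ pperp z) (hperp1 : ∑ z, pperp z = 1)
    (havg : ∀ z, 0 < pavg z) (havg1 : ∑ z, pavg z = 1)
    (hq : ∀ z, q z = F * p z + (1 - F) * pperp z)
    (h1 : ∑ z, pperp z * (p z / pavg z) = 1)
    (h2 : ∑ z, pavg z * (p z / pavg z) ^ 2 = 2) :
    2 * (∑ z, q z * (p z / pavg z)) / (∑ z, pavg z * (p z / pavg z) ^ 2) - 1 = F := by
  have hpp : ∑ z, p z * (p z / pavg z) = 2 := by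
    rw [← h2]
    refine Finset.sum_congr rfl fun z _ => ?_
    have hne := (havg z).ne'
    field_simp
  have hqsum : ∑ z, q z * (p z / pavg z) = F + 1 := by
    have : ∀ z, q z * (p z / pavg z)
        = F * (p z * (p z / pavg z)) + (1 - F) * (pperp z * (p z / pavg z)) := by
      intro z; rw [hq z]; ring
    simp only [this, Finset.sum_add_distrib, ← Finset.mul_sum, hpp, h1]
    ring
  rw [h2, hqsum]; ring
end
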